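/- arXiv:0810.5143 — 2 statements merged into one kernel-verified Lean document; each statement's English description precedes it below -/
import Mathlib

section
/- For all r > 0: g''(r) + g'(r)/r + ( r^{2α} V₀ e^{U(r)} − 1/r² ) g(r) = − r^{2α+1} e^{U(r)}. Moreover g(r) → 0 as r → 0⁺, g(r) → 0 as r → ∞, and there is a constant C depending only on α and V₀ with |g(r)| ≤ C r/(1+r²) for all r > 0. -/
open MeasureTheory Metric Real Filter
open scoped RealInnerProductSpace Topology

noncomputable section

/-- `ℝ²`, realized as the Euclidean space on `Fin 2`. -/
abbrev R2 : Type := EuclideanSpace ℝ (Fin 2)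

/-- The Laplacian of `u : ℝ² → ℝ` at `x`. -/
def lap (u : R2 → ℝ) (x : R2) : ℝ :=
  ∑ j : Fin 2, fderiv ℝ (fun y => fderiv ℝ u y (EuclideanSpace.single j 1)) x
    (EuclideanSpace.single j 1)

/-- `a = V₀/(8(1+α)²)`. -/
def aconst (α V0 : ℝ) : ℝ := V0 / (8 * (1 + α) ^ 2)

/-- `U(r) = -2 log(1 + a r^{2α+2})`. -/
def U1 (α V0 r : ℝ) : ℝ := -2 * Real.log (1 + aconst α V0 * r ^ (2 * α + 2))

/-- `g(r) = -(2(1+α)/(α V₀)) r/(1 + a r^{2α+2})`. -/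
def g1 (α V0 r : ℝ) : ℝ :=
  -(2 * (1 + α) / (α * V0)) * r / (1 + aconst α V0 * r ^ (2 * α + 2))

/-!
Up to the factor `-2(1+α)/(αV₀)`, `g` is the profile `r / (1 + a r^p)` with `p = 2α + 2`, and
`e^U = (1 + a r^p)⁻²`. For such a profile a direct computation gives
`f'' + f'/r + (2ap² r^(p-2) (1 + a r^p)⁻² - 1/r²) f = ap(p-2) r^(p-1) (1 + a r^p)⁻²`,
and the choice `a = V₀/(2p²)` turns `2ap²` into `V₀` and `ap(p-2)` into the inverse of the
factor. Since `p ≥ 2`, `1 + r² ≤ (2 + 1/a)(1 + a r^p)`, which gives the bound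
`|g(r)| ≲ r/(1+r²)`, and both limits follow from it.
-/

def radialProfile (a p r : ℝ) : ℝ := r / (1 + a * r ^ p)

section RadialProfile

variable {a p r : ℝ}

lemma one_add_mul_rpow_pos (ha : 0 ≤ a) (hr : 0 ≤ r) : 0 < 1 + a * r ^ p := by
  have := mul_nonneg ha (rpow_nonneg hr p)
  linarith

lemma hasDerivAt_one_add_mul_rpow (hr : 0 < r) :
    HasDerivAt (fun x => 1 + a * x ^ p) (a * p * r ^ p / r) r := by
  have h := ((hasDerivAt_rpow_const (p := p) (Or.inl hr.ne')).const_mul a).const_add 1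
  refine h.congr_deriv ?_
  rw [rpow_sub_one hr.ne']
  ring

lemma hasDerivAt_radialProfile (ha : 0 ≤ a) (hr : 0 < r) :
    HasDerivAt (radialProfile a p) ((1 + a * (1 - p) * r ^ p) / (1 + a * r ^ p) ^ 2) r := by
  have hD := one_add_mul_rpow_pos (p := p) ha hr.le
  refine ((hasDerivAt_id r).div (hasDerivAt_one_add_mul_rpow hr) hD.ne').congr_deriv ?_
  simp only [id]
  field_simp
  ring

lemma hasDerivAt_deriv_radialProfile (ha : 0 ≤ a) (hr : 0 < r) :
    HasDerivAt (deriv (radialProfile a p))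
      (a * p * r ^ p * (-(1 + p) - a * (1 - p) * r ^ p) / (r * (1 + a * r ^ p) ^ 3)) r := by
  have hD := one_add_mul_rpow_pos (p := p) ha hr.le
  have hderiv : deriv (radialProfile a p)
      =ᶠ[𝓝 r] fun x => (1 + a * (1 - p) * x ^ p) / (1 + a * x ^ p) ^ 2 := by
    filter_upwards [Ioi_mem_nhds hr] with x hx
    exact (hasDerivAt_radialProfile ha hx).deriv
  have hN : HasDerivAt (fun x => 1 + a * (1 - p) * x ^ p) ((1 - p) * (a * p * r ^ p / r)) r := by
    refine (hasDerivAt_one_add_mul_rpow (a := a * (1 - p)) (p := p) hr).congr_deriv ?_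
    ring
  refine HasDerivAt.congr_of_eventuallyEq ?_ hderiv
  refine (hN.div ((hasDerivAt_one_add_mul_rpow hr).pow 2) (pow_ne_zero 2 hD.ne')).congr_deriv ?_
  simp only [Pi.pow_apply]
  field_simp
  ring

theorem radialProfile_ode (ha : 0 ≤ a) (hr : 0 < r) :
    deriv (deriv (radialProfile a p)) r + deriv (radialProfile a p) r / r
        + (r ^ (p - 2) * (2 * a * p ^ 2) * ((1 + a * r ^ p) ^ 2)⁻¹ - 1 / r ^ 2)
          * radialProfile a p r
      = a * p * (p - 2) * r ^ (p - 1) * ((1 + a * r ^ p) ^ 2)⁻¹ := by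
  have hD := one_add_mul_rpow_pos (p := p) ha hr.le
  rw [(hasDerivAt_deriv_radialProfile ha hr).deriv, (hasDerivAt_radialProfile ha hr).deriv,
    rpow_sub hr, rpow_sub_one hr.ne', rpow_two, radialProfile]
  field_simp
  ring

lemma one_add_sq_le (ha : 0 < a) (hp : 2 ≤ p) (hr : 0 ≤ r) :
    1 + r ^ 2 ≤ (2 + 1 / a) * (1 + a * r ^ p) := by
  have hrp : 0 ≤ a * r ^ p := mul_nonneg ha.le (rpow_nonneg hr p)
  have hexpand : (2 + 1 / a) * (1 + a * r ^ p) = 2 + 1 / a + 2 * (a * r ^ p) + r ^ p := by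
    field_simp
    ring
  have hinv : 0 < 1 / a := by positivity
  rcases le_total r 1 with hr1 | hr1
  · nlinarith [rpow_nonneg hr p]
  · have : r ^ 2 ≤ r ^ p := by
      rw [← rpow_two]
      exact rpow_le_rpow_of_exponent_le hr1 hp
    linarith

lemma abs_radialProfile_le (ha : 0 < a) (hp : 2 ≤ p) (hr : 0 < r) :
    |radialProfile a p r| ≤ (2 + 1 / a) * r / (1 + r ^ 2) := by
  have hD := one_add_mul_rpow_pos (p := p) ha.le hr.le
  rw [radialProfile, abs_of_nonneg (div_nonneg hr.le hD.le), div_le_div_iff₀ hD (by positivity)]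
  nlinarith [one_add_sq_le ha hp hr.le]

end RadialProfile

section DecayBound

variable {f : ℝ → ℝ} {C : ℝ}

lemma tendsto_nhdsGT_zero_of_abs_le (h : ∀ r > 0, |f r| ≤ C * r / (1 + r ^ 2)) :
    Tendsto f (𝓝[>] 0) (𝓝 0) := by
  have hbound : Tendsto (fun r : ℝ => C * r / (1 + r ^ 2)) (𝓝[>] 0) (𝓝 0) := by
    have hcont : Continuous fun r : ℝ => C * r / (1 + r ^ 2) :=
      (continuous_const.mul continuous_id).div (continuous_const.add (continuous_pow 2))
        fun r => by positivity
    simpa using hcont.continuousWithinAt.tendsto (s := Set.Ioi 0) (x := 0)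
  refine squeeze_zero_norm' ?_ hbound
  filter_upwards [self_mem_nhdsWithin] with r hr
  exact h r hr

lemma tendsto_atTop_of_abs_le (h : ∀ r > 0, |f r| ≤ C * r / (1 + r ^ 2)) :
    Tendsto f atTop (𝓝 0) := by
  have hC : 0 ≤ C := by
    have := (abs_nonneg _).trans (h 1 one_pos)
    norm_num at this
    linarith
  have hlim : Tendsto (fun r : ℝ => C * r⁻¹) atTop (𝓝 0) := by
    simpa using tendsto_inv_atTop_zero.const_mul C
  refine squeeze_zero_norm' ?_ hlim
  filter_upwards [eventually_gt_atTop 0] with r hr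
  calc ‖f r‖ ≤ C * r / (1 + r ^ 2) := h r hr
    _ ≤ C * r / r ^ 2 := by gcongr; linarith
    _ = C * r⁻¹ := by field_simp

end DecayBound

section G1

variable {α V0 : ℝ}

lemma aconst_pos (hα : 0 < α) (hV0 : 0 < V0) : 0 < aconst α V0 := by
  unfold aconst
  positivity

lemma g1_eq_const_mul_radialProfile :
    g1 α V0 = fun r => -(2 * (1 + α) / (α * V0)) * radialProfile (aconst α V0) (2 * α + 2) r :=
  funext fun _ => mul_div_assoc _ _ _

lemma exp_U1 (ha : 0 ≤ aconst α V0) {r : ℝ} (hr : 0 ≤ r) :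
    exp (U1 α V0 r) = ((1 + aconst α V0 * r ^ (2 * α + 2)) ^ 2)⁻¹ := by
  have hD := one_add_mul_rpow_pos (p := 2 * α + 2) ha hr
  rw [U1, neg_mul, exp_neg, mul_comm, exp_mul, exp_log hD, rpow_two]

lemma two_mul_aconst_mul_sq (hα : 1 + α ≠ 0) : 2 * aconst α V0 * (2 * α + 2) ^ 2 = V0 := by
  unfold aconst
  field_simp
  ring

lemma g1_coeff_mul_aconst_mul (hα : α ≠ 0) (hα' : 1 + α ≠ 0) (hV0 : V0 ≠ 0) :
    2 * (1 + α) / (α * V0) * (aconst α V0 * (2 * α + 2) * (2 * α)) = 1 := by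
  unfold aconst
  field_simp
  ring

lemma abs_g1_le (hα : 0 < α) (hV0 : 0 < V0) {r : ℝ} (hr : 0 < r) :
    |g1 α V0 r| ≤ 2 * (1 + α) / (α * V0) * (2 + 1 / aconst α V0) * r / (1 + r ^ 2) := by
  set K := 2 * (1 + α) / (α * V0)
  calc |g1 α V0 r| = K * |radialProfile (aconst α V0) (2 * α + 2) r| := by
        rw [g1_eq_const_mul_radialProfile, abs_mul, abs_neg, abs_of_pos (by positivity)]
    _ ≤ K * ((2 + 1 / aconst α V0) * r / (1 + r ^ 2)) := by
        gcongr
        exact abs_radialProfile_le (aconst_pos hα hV0) (by linarith) hr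
    _ = K * (2 + 1 / aconst α V0) * r / (1 + r ^ 2) := by ring

theorem g1_ode (hα : 0 < α) (hV0 : 0 < V0) {r : ℝ} (hr : 0 < r) :
    deriv (deriv (g1 α V0)) r + deriv (g1 α V0) r / r
        + (r ^ (2 * α) * V0 * exp (U1 α V0 r) - 1 / r ^ 2) * g1 α V0 r
      = -(r ^ (2 * α + 1) * exp (U1 α V0 r)) := by
  set K := 2 * (1 + α) / (α * V0)
  have ha := (aconst_pos hα hV0).le
  have hode := radialProfile_ode (p := 2 * α + 2) ha hr
  rw [show 2 * α + 2 - 2 = 2 * α by ring, show 2 * α + 2 - 1 = 2 * α + 1 by ring,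
    two_mul_aconst_mul_sq (by linarith)] at hode
  rw [exp_U1 ha hr.le, g1_eq_const_mul_radialProfile]
  simp only [deriv_const_mul_field']
  linear_combination (-K) * hode
    - (r ^ (2 * α + 1) * ((1 + aconst α V0 * r ^ (2 * α + 2)) ^ 2)⁻¹)
      * g1_coeff_mul_aconst_mul hα.ne' (by linarith) hV0.ne'

end G1

/-- Equation (2.7)–(2.8): `g` solves the inhomogeneous linearized radial ODE,
vanishes at `0` and at `∞`, and satisfies `|g(r)| ≤ C r/(1+r²)`. -/
theorem g_solves_radial_ODE (α V0 : ℝ) (hα : 0 < α) (hV0 : 0 < V0) :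
    (∀ r > (0 : ℝ), deriv (deriv (g1 α V0)) r + deriv (g1 α V0) r / r
        + (r ^ (2 * α) * V0 * Real.exp (U1 α V0 r) - 1 / r ^ 2) * g1 α V0 r
        = -(r ^ (2 * α + 1) * Real.exp (U1 α V0 r)))
    ∧ Tendsto (g1 α V0) (𝓝[>] 0) (𝓝 0)
    ∧ Tendsto (g1 α V0) atTop (𝓝 0)
    ∧ ∃ C : ℝ, ∀ r > (0 : ℝ), |g1 α V0 r| ≤ C * r / (1 + r ^ 2) := by
  have hbound := fun r (hr : r > 0) => abs_g1_le hα hV0 hr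
  exact ⟨fun r hr => g1_ode hα hV0 hr, tendsto_nhdsGT_zero_of_abs_le hbound,
    tendsto_atTop_of_abs_le hbound, _, hbound⟩
end
end

section
/- Let δ₁ > 0 with δ₁ ≠ 1, and let f be a C² function on (0,∞) solving f''(s) + f'(s)/s + ( 8/(1+s²)² − δ₁²/s² ) f(s) = 0 for all s > 0. If there is a constant C with |f(s)| ≤ C s^{δ₁} for all s ∈ (0,1] and |f(s)| ≤ C s^{−δ₁} for all s ≥ 1, then f ≡ 0 on (0,∞). -/
/-!
For `d = ±δ₁` the functions `phi d s = s^d (d - 1 + 2/(1 + s²))` solve the equation, and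
`s (u' v - u v')` is constant for any two solutions `u, v` (Abel). For `phi (-δ₁)` and `phi δ₁`
this constant is `2δ₁(δ₁² - 1) ≠ 0`, so `f = a phi (-δ₁) + b phi δ₁`. As `s → 0⁺`,
`s^δ₁ phi (-δ₁) s → 1 - δ₁ ≠ 0` while `s^δ₁ f s` and `s^δ₁ phi δ₁ s` tend to `0`, which forces
`a = 0`; then as `s → ∞`, `s^(-δ₁) phi δ₁ s → δ₁ - 1 ≠ 0` while `s^(-δ₁) f s → 0`, so `b = 0`.
-/

open Real Filter Topology

noncomputable section

namespace RadialODE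

def IsSolution (V u u' : ℝ → ℝ) : Prop :=
  ∀ s > 0, HasDerivAt u (u' s) s ∧ HasDerivAt u' (-(u' s) / s - V s * u s) s

def wronskian (u u' v v' : ℝ → ℝ) (s : ℝ) : ℝ := s * (u' s * v s - u s * v' s)

section Wronskian

variable {V u u' v v' : ℝ → ℝ}

theorem isSolution_of_contDiffOn {f : ℝ → ℝ} (hf : ContDiffOn ℝ 2 f (Set.Ioi 0))
    (hODE : ∀ s > (0 : ℝ), deriv (deriv f) s + deriv f s / s + V s * f s = 0) :
    IsSolution V f (deriv f) := by
  obtain ⟨hf₁, -, hf₂⟩ := (contDiffOn_succ_iff_deriv_of_isOpen (n := 1) isOpen_Ioi).1 hf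
  intro s hs
  have hnhds : Set.Ioi (0 : ℝ) ∈ 𝓝 s := isOpen_Ioi.mem_nhds hs
  refine ⟨(hf₁.differentiableAt hnhds).hasDerivAt, ?_⟩
  have h := ((hf₂.differentiableOn one_ne_zero).differentiableAt hnhds).hasDerivAt
  have hf'' : deriv (deriv f) s = -deriv f s / s - V s * f s := by
    linarith [hODE s hs, neg_div s (deriv f s)]
  rwa [hf''] at h

theorem IsSolution.hasDerivAt_wronskian (hu : IsSolution V u u') (hv : IsSolution V v v')
    {s : ℝ} (hs : 0 < s) : HasDerivAt (wronskian u u' v v') 0 s := by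
  obtain ⟨hu₁, hu₂⟩ := hu s hs
  obtain ⟨hv₁, hv₂⟩ := hv s hs
  refine ((hasDerivAt_id' s).fun_mul
    ((hu₂.fun_mul hv₁).fun_sub (hu₁.fun_mul hv₂))).congr_deriv ?_
  field_simp
  ring

theorem IsSolution.wronskian_eq (hu : IsSolution V u u') (hv : IsSolution V v v')
    {s t : ℝ} (hs : 0 < s) (ht : 0 < t) : wronskian u u' v v' s = wronskian u u' v v' t :=
  isOpen_Ioi.is_const_of_deriv_eq_zero isPreconnected_Ioi
    (fun _ hx ↦ (hu.hasDerivAt_wronskian hv hx).differentiableAt.differentiableWithinAt)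
    (fun _ hx ↦ (hu.hasDerivAt_wronskian hv hx).deriv) hs ht

theorem IsSolution.exists_eq_add {f f' : ℝ → ℝ} (hf : IsSolution V f f')
    (hu : IsSolution V u u') (hv : IsSolution V v v') (huv : wronskian u u' v v' 1 ≠ 0) :
    ∃ a b : ℝ, ∀ s > 0, f s = a * u s + b * v s := by
  refine ⟨wronskian f f' v v' 1 / wronskian u u' v v' 1,
    -wronskian f f' u u' 1 / wronskian u u' v v' 1, fun s hs ↦ ?_⟩
  rw [div_mul_eq_mul_div, div_mul_eq_mul_div, ← add_div, eq_div_iff huv,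
    ← hf.wronskian_eq hv hs one_pos, ← hf.wronskian_eq hu hs one_pos,
    ← hu.wronskian_eq hv hs one_pos]
  simp only [wronskian]
  ring

end Wronskian

def potential (d s : ℝ) : ℝ := 8 / (1 + s ^ 2) ^ 2 - d ^ 2 / s ^ 2

theorem potential_neg (d : ℝ) : potential (-d) = potential d := by
  funext s
  simp [potential]

def phi (d s : ℝ) : ℝ := s ^ d * (d - 1 + 2 / (1 + s ^ 2))

def phiDeriv (d s : ℝ) : ℝ :=
  s ^ d * (d * (d - 1 + 2 / (1 + s ^ 2)) / s - 4 * s / (1 + s ^ 2) ^ 2)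

theorem hasDerivAt_rpow_mul {h : ℝ → ℝ} {h' s : ℝ} (d : ℝ) (hs : 0 < s)
    (hh : HasDerivAt h h' s) :
    HasDerivAt (fun t ↦ t ^ d * h t) (s ^ d * (d * h s / s + h')) s := by
  refine ((hasDerivAt_rpow_const (p := d) (Or.inl hs.ne')).fun_mul hh).congr_deriv ?_
  rw [rpow_sub_one hs.ne']
  ring

theorem isSolution_phi (d : ℝ) : IsSolution (potential d) (phi d) (phiDeriv d) := by
  intro s hs
  have hq : HasDerivAt (fun t : ℝ ↦ 1 + t ^ 2) (2 * s) s := by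
    simpa using (hasDerivAt_pow 2 s).const_add 1
  have hg := ((hasDerivAt_const s (2 : ℝ)).fun_div hq (by positivity)).const_add (d - 1)
  have hr := (((hg.const_mul d).fun_div (hasDerivAt_id' s) hs.ne').fun_sub
    (((hasDerivAt_id' s).const_mul 4).fun_div (hq.fun_pow 2) (by positivity)))
  constructor
  · refine (hasDerivAt_rpow_mul d hs hg).congr_deriv ?_
    simp only [phiDeriv]
    field_simp
    ring
  · refine (hasDerivAt_rpow_mul d hs hr).congr_deriv ?_
    simp only [phi, phiDeriv, potential]
    field_simp
    ring

theorem wronskian_phi_neg_phi_one (d : ℝ) :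
    wronskian (phi (-d)) (phiDeriv (-d)) (phi d) (phiDeriv d) 1 = 2 * d * (d ^ 2 - 1) := by
  simp only [wronskian, phi, phiDeriv, one_rpow]
  ring

theorem abs_phi_le (d : ℝ) {s : ℝ} (hs : 0 < s) : |phi d s| ≤ (|d - 1| + 2) * s ^ d := by
  have hq : 0 < 2 / (1 + s ^ 2) := by positivity
  rw [phi, abs_mul, abs_of_pos (rpow_pos_of_pos hs d), mul_comm]
  gcongr
  calc |d - 1 + 2 / (1 + s ^ 2)| ≤ |d - 1| + |2 / (1 + s ^ 2)| := abs_add_le _ _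
    _ ≤ |d - 1| + 2 := by
      rw [abs_of_pos hq]
      gcongr
      exact div_le_self zero_le_two (by nlinarith)

theorem tendsto_rpow_mul_nhdsGT_zero_of_abs_le {g : ℝ → ℝ} {δ C : ℝ} (hδ : 0 < δ)
    (hg : ∀ s : ℝ, 0 < s → s ≤ 1 → |g s| ≤ C * s ^ δ) :
    Tendsto (fun s ↦ s ^ δ * g s) (𝓝[>] 0) (𝓝 0) := by
  have h0 : Tendsto (fun s : ℝ ↦ C * s ^ (δ + δ)) (𝓝[>] 0) (𝓝 0) := by
    have := ((continuous_rpow_const (by positivity : 0 ≤ δ + δ)).tendsto 0).const_mul C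
    rw [zero_rpow (by positivity), mul_zero] at this
    exact this.mono_left nhdsWithin_le_nhds
  refine squeeze_zero_norm' ?_ h0
  filter_upwards [Ioc_mem_nhdsGT one_pos] with s ⟨hs, hs1⟩
  rw [norm_mul, norm_of_nonneg (rpow_nonneg hs.le δ), norm_eq_abs, rpow_add hs]
  calc s ^ δ * |g s| ≤ s ^ δ * (C * s ^ δ) := by gcongr; exact hg s hs hs1
    _ = C * (s ^ δ * s ^ δ) := by ring

theorem tendsto_rpow_neg_mul_atTop_of_abs_le {g : ℝ → ℝ} {δ C : ℝ} (hδ : 0 < δ)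
    (hg : ∀ s : ℝ, 1 ≤ s → |g s| ≤ C * s ^ (-δ)) :
    Tendsto (fun s ↦ s ^ (-δ) * g s) atTop (𝓝 0) := by
  have h0 : Tendsto (fun s : ℝ ↦ C * s ^ (-(δ + δ))) atTop (𝓝 0) := by
    simpa using (tendsto_rpow_neg_atTop (by positivity : 0 < δ + δ)).const_mul C
  refine squeeze_zero_norm' ?_ h0
  filter_upwards [eventually_ge_atTop 1] with s hs1
  have hs : 0 < s := one_pos.trans_le hs1
  rw [norm_mul, norm_of_nonneg (rpow_nonneg hs.le _), norm_eq_abs, neg_add, rpow_add hs]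
  calc s ^ (-δ) * |g s| ≤ s ^ (-δ) * (C * s ^ (-δ)) := by gcongr; exact hg s hs1
    _ = C * (s ^ (-δ) * s ^ (-δ)) := by ring

theorem tendsto_rpow_mul_phi_neg_nhdsGT_zero (d : ℝ) :
    Tendsto (fun s ↦ s ^ d * phi (-d) s) (𝓝[>] 0) (𝓝 (1 - d)) := by
  have hc : Continuous (fun s : ℝ ↦ -d - 1 + 2 / (1 + s ^ 2)) :=
    continuous_const.add (continuous_const.div (by fun_prop) fun s ↦ by positivity)
  have h : Tendsto (fun s : ℝ ↦ -d - 1 + 2 / (1 + s ^ 2)) (𝓝[>] 0) (𝓝 (1 - d)) := by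
    convert (hc.tendsto 0).mono_left nhdsWithin_le_nhds using 2
    norm_num
    ring
  refine h.congr' ?_
  filter_upwards [self_mem_nhdsWithin] with s (hs : 0 < s)
  rw [phi, ← mul_assoc, ← rpow_add hs, add_neg_cancel, rpow_zero, one_mul]

theorem tendsto_rpow_neg_mul_phi_atTop (d : ℝ) :
    Tendsto (fun s ↦ s ^ (-d) * phi d s) atTop (𝓝 (d - 1)) := by
  have h : Tendsto (fun s : ℝ ↦ d - 1 + 2 / (1 + s ^ 2)) atTop (𝓝 (d - 1)) := by
    simpa using tendsto_const_nhds.add (tendsto_const_nhds.div_atTop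
      (tendsto_atTop_add_const_left _ 1 (tendsto_pow_atTop (α := ℝ) two_ne_zero)))
  refine h.congr' ?_
  filter_upwards [eventually_gt_atTop 0] with s hs
  rw [phi, ← mul_assoc, ← rpow_add hs, neg_add_cancel, rpow_zero, one_mul]

theorem coeff_eq_zero_of_decay_nhdsGT_zero {g : ℝ → ℝ} {δ C a b : ℝ} (hδ : 0 < δ)
    (hδ₁ : δ ≠ 1) (hg : ∀ s > 0, g s = a * phi (-δ) s + b * phi δ s)
    (hdecay : ∀ s : ℝ, 0 < s → s ≤ 1 → |g s| ≤ C * s ^ δ) : a = 0 := by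
  have hlim : Tendsto (fun s ↦ s ^ δ * g s) (𝓝[>] 0) (𝓝 (a * (1 - δ) + b * 0)) := by
    refine (((tendsto_rpow_mul_phi_neg_nhdsGT_zero δ).const_mul a).add
      ((tendsto_rpow_mul_nhdsGT_zero_of_abs_le hδ fun s hs _ ↦ abs_phi_le δ hs).const_mul
        b)).congr' ?_
    filter_upwards [self_mem_nhdsWithin] with s (hs : 0 < s)
    rw [hg s hs]
    ring
  have h := tendsto_nhds_unique hlim (tendsto_rpow_mul_nhdsGT_zero_of_abs_le hδ hdecay)
  rw [mul_zero, add_zero] at h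
  exact (mul_eq_zero.1 h).resolve_right (sub_ne_zero.2 hδ₁.symm)

theorem coeff_eq_zero_of_decay_atTop {g : ℝ → ℝ} {δ C b : ℝ} (hδ : 0 < δ) (hδ₁ : δ ≠ 1)
    (hg : ∀ s > 0, g s = b * phi δ s)
    (hdecay : ∀ s : ℝ, 1 ≤ s → |g s| ≤ C * s ^ (-δ)) : b = 0 := by
  have hlim : Tendsto (fun s ↦ s ^ (-δ) * g s) atTop (𝓝 (b * (δ - 1))) := by
    refine ((tendsto_rpow_neg_mul_phi_atTop δ).const_mul b).congr' ?_
    filter_upwards [eventually_gt_atTop 0] with s hs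
    rw [hg s hs]
    ring
  have h := tendsto_nhds_unique hlim (tendsto_rpow_neg_mul_atTop_of_abs_le hδ hdecay)
  exact (mul_eq_zero.1 h).resolve_right (sub_ne_zero.2 hδ₁)

end RadialODE

open RadialODE

/-- A solution of the linearized radial ODE decaying like `s^{δ₁}` at `0` and
`s^{-δ₁}` at `∞` must vanish (for `δ₁ ≠ 1`). -/
theorem decaying_solution_vanishes (δ₁ C : ℝ) (hδ₁ : 0 < δ₁) (hδ₁_ne : δ₁ ≠ 1)
    (f : ℝ → ℝ) (hreg : ContDiffOn ℝ 2 f (Set.Ioi 0))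
    (hODE : ∀ s > (0 : ℝ), deriv (deriv f) s + deriv f s / s
      + (8 / (1 + s ^ 2) ^ 2 - δ₁ ^ 2 / s ^ 2) * f s = 0)
    (hb0 : ∀ s : ℝ, 0 < s → s ≤ 1 → |f s| ≤ C * s ^ δ₁)
    (hbinf : ∀ s : ℝ, 1 ≤ s → |f s| ≤ C * s ^ (-δ₁)) :
    ∀ s > (0 : ℝ), f s = 0 := by
  have hf : IsSolution (potential δ₁) f (deriv f) := isSolution_of_contDiffOn hreg hODE
  have hw : wronskian (phi (-δ₁)) (phiDeriv (-δ₁)) (phi δ₁) (phiDeriv δ₁) 1 ≠ 0 := by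
    rw [wronskian_phi_neg_phi_one]
    exact mul_ne_zero (by positivity)
      (sub_ne_zero.2 ((pow_eq_one_iff_of_nonneg hδ₁.le two_ne_zero).not.2 hδ₁_ne))
  obtain ⟨a, b, hab⟩ := hf.exists_eq_add
    (potential_neg δ₁ ▸ isSolution_phi (-δ₁)) (isSolution_phi δ₁) hw
  have ha : a = 0 := coeff_eq_zero_of_decay_nhdsGT_zero hδ₁ hδ₁_ne hab hb0
  have hb : b = 0 :=
    coeff_eq_zero_of_decay_atTop hδ₁ hδ₁_ne (fun s hs ↦ by simpa [ha] using hab s hs) hbinf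
  intro s hs
  simpa [ha, hb] using hab s hs
end
end
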